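/- In the setup of the curved homotopy transfer theorem, the maps α and β satisfy β ∘ m¹_B ∘ m¹_B ∘ α = d_A ∘ d_A. -/
import Mathlib

/-!
A lightweight framework for filtered A∞ algebras over the Novikov ring `Λ`.

Operations of arity `k` are encoded as maps `m k : (ℕ → A) → A` which only depend on the
inputs at positions `0, …, k-1` (the field `depends` below); this makes insertion of
operations into slots of other operations straightforward to express.
-/

open scoped BigOperators

section AInftyFramework

variable {Λ : Type} [CommRing Λ]

/-- `ins2 outer inner j₁ i ar a` is `outer^{ar}` applied to
`a₀, …, a_{j₁-1}, inner^i(a_{j₁}, …, a_{j₁+i-1}), a_{j₁+i}, …`: the insertion of the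
operation `inner` at position `j₁` of the operation `outer`. -/
def ins2 {A B : Type} (outer : ℕ → (ℕ → A) → B) (inner : ℕ → (ℕ → A) → A)
    (j₁ i ar : ℕ) (a : ℕ → A) : B :=
  outer ar fun t =>
    if t < j₁ then a t else if t = j₁ then inner i fun s => a (j₁ + s) else a (t + i - 1)

/-- The full quadratic sum `Σ_{j₁+i+j₂=k} outer^{j₁+1+j₂}(id^{⊗j₁} ⊗ inner^i ⊗ id^{⊗j₂})`
evaluated on the inputs `a` (signs are suppressed: we work up to sign). -/
def insSum {A B : Type} [AddCommMonoid B]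
    (outer : ℕ → (ℕ → A) → B) (inner : ℕ → (ℕ → A) → A) (k : ℕ) (a : ℕ → A) : B :=
  ∑ j₁ ∈ Finset.range (k + 1), ∑ i ∈ Finset.range (k + 1 - j₁),
    ins2 outer inner j₁ i (k - i + 1) a

/-- Extend a `Fin l`-indexed tuple of naturals by zero. -/
def extFn {l : ℕ} (c : Fin l → ℕ) (j : ℕ) : ℕ := if h : j < l then c ⟨j, h⟩ else 0

/-- Partial sums of a tuple of naturals. -/
def psum {l : ℕ} (c : Fin l → ℕ) (j : ℕ) : ℕ := ∑ p ∈ Finset.range j, extFn c p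

/-- `morphRHS outer inner k x = Σ_{l} Σ_{i₁+⋯+i_l = k} outer^l (inner^{i₁} ⊗ ⋯ ⊗ inner^{i_l})`
evaluated on the inputs `x`; the right-hand side of the quadratic A∞ homomorphism
relation, and also the formula for the composition of A∞ homomorphisms. -/
noncomputable def morphRHS {A B C : Type} [AddCommMonoid C] [TopologicalSpace C]
    (outer : ℕ → (ℕ → B) → C) (inner : ℕ → (ℕ → A) → B) (k : ℕ) (x : ℕ → A) : C :=
  ∑' l : ℕ, ∑ c ∈ Finset.Nat.antidiagonalTuple l k,
    outer l fun j => inner (extFn c j) fun s => x (psum c j + s)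

/-- `interleave k c x b` is the sequence `b^{c₀}, x₀, b^{c₁}, x₁, …, x_{k-1}, b^{c_k}, …`:
the inputs `x₀, …, x_{k-1}` with `cⱼ` copies of `b` inserted in the `j`-th gap. -/
noncomputable def interleave {A : Type} (k : ℕ) (c : ℕ → ℕ) (x : ℕ → A) (b : A) : ℕ → A :=
  fun t =>
    if h : ∃ j, j < k ∧ t = (∑ l ∈ Finset.range (j + 1), c l) + j then x h.choose else b

/-- The `b`-deformed operations: `m^k_b := Σ_n m^{k+n}` with `n` copies of `b` inserted in
all possible positions among the `k` inputs. -/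
noncomputable def deform {A B : Type} [AddCommMonoid B] [TopologicalSpace B]
    (m : ℕ → (ℕ → A) → B) (b : A) (k : ℕ) (x : ℕ → A) : B :=
  ∑' c : Fin (k + 1) → ℕ, m (k + ∑ j, c j) (interleave k (extFn c) x b)

/-- A filtered A∞ algebra structure (up to sign) on a `Λ`-module `A`: an energy filtration
`F` by submodules, operations `m^k` respecting the filtration, curvature `m⁰` of positive
energy, and the quadratic A∞ relations. -/
structure IsFilteredAInfty {A : Type} [AddCommGroup A] [Module Λ A]
    (F : ℝ → Submodule Λ A) (m : ℕ → (ℕ → A) → A) : Prop where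
  depends : ∀ (k : ℕ) (f g : ℕ → A), (∀ t < k, f t = g t) → m k f = m k g
  antitone : ∀ {r s : ℝ}, r ≤ s → F s ≤ F r
  filtered : ∀ (k : ℕ) (x : ℕ → A) (lam : ℕ → ℝ),
      (∀ t < k, x t ∈ F (lam t)) → m k x ∈ F (∑ t ∈ Finset.range k, lam t)
  curvature_pos : ∃ ε > (0 : ℝ), m 0 (fun _ => 0) ∈ F ε
  quad : ∀ (k : ℕ) (a : ℕ → A), insSum m m k a = 0

/-- An element has positive valuation when it lies in some positive level of the
energy filtration. -/
def PosVal {A : Type} [AddCommGroup A] [Module Λ A]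
    (F : ℝ → Submodule Λ A) (a : A) : Prop :=
  ∃ ε > (0 : ℝ), a ∈ F ε

/-- The quadratic A∞ homomorphism relations (up to sign) for a family
`f^k : A^{⊗k} → B`:
`Σ f^{j₁+1+j₂}(id^{⊗j₁} ⊗ m_A^i ⊗ id^{⊗j₂}) = Σ m_B^l (f^{i₁} ⊗ ⋯ ⊗ f^{i_l})`. -/
structure IsAInftyHom {A B : Type} [AddCommMonoid B] [TopologicalSpace B]
    (mA : ℕ → (ℕ → A) → A) (mB : ℕ → (ℕ → B) → B) (f : ℕ → (ℕ → A) → B) : Prop where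
  depends : ∀ (k : ℕ) (x y : ℕ → A), (∀ t < k, x t = y t) → f k x = f k y
  quad : ∀ (k : ℕ) (x : ℕ → A), insSum f mA k x = morphRHS mB f k x

/-- A weakly filtered family of maps with energy loss `c`. -/
def WeaklyFiltered {A B : Type} [AddCommGroup A] [Module Λ A] [AddCommGroup B] [Module Λ B]
    (FA : ℝ → Submodule Λ A) (FB : ℝ → Submodule Λ B)
    (f : ℕ → (ℕ → A) → B) (c : ℝ) : Prop :=
  ∀ (k : ℕ) (x : ℕ → A) (lam : ℕ → ℝ), (∀ t < k, x t ∈ FA (lam t)) →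
    f k x ∈ FB (-(c * k) + ∑ t ∈ Finset.range k, lam t)

/-- `e` is a (strict) unit for the operations `m`. -/
structure IsUnital {A : Type} [Zero A] (m : ℕ → (ℕ → A) → A) (e : A) : Prop where
  unit_left : ∀ y : A, m 2 (fun t => if t = 0 then e else y) = y
  unit_right : ∀ y : A, m 2 (fun t => if t = 1 then e else y) = y
  unit_other : ∀ k, k ≠ 2 → ∀ j < k, ∀ x : ℕ → A, m k (Function.update x j e) = 0

/-- A unital A∞ homomorphism: `f¹(e_A) = e_B` and higher components vanish on the unit. -/
def IsUnitalHom {A B : Type} [Zero B] (f : ℕ → (ℕ → A) → B) (eA : A) (eB : B) : Prop :=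
  f 1 (fun _ => eA) = eB ∧
    ∀ k, 2 ≤ k → ∀ j < k, ∀ x : ℕ → A, f k (Function.update x j eA) = 0

end AInftyFramework

section LowOps

/-- The curvature `m⁰` of an operation family. -/
def op0 {A : Type} [Zero A] (m : ℕ → (ℕ → A) → A) : A := m 0 (fun _ => 0)

/-- The differential `m¹` of an operation family. -/
def op1 {A : Type} (m : ℕ → (ℕ → A) → A) (z : A) : A := m 1 (fun _ => z)

/-- The binary product `m²` of an operation family. -/
def op2 {A : Type} (m : ℕ → (ℕ → A) → A) (u v : A) : A :=
  m 2 (fun t => if t = 0 then u else v)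

end LowOps

/-- The quadratic A∞ relation at arity one: `m²(m⁰,z) + m¹(m¹ z) + m²(z,m⁰) = 0`. -/
lemma quad_one {Λ B : Type} [CommRing Λ] [AddCommGroup B] [Module Λ B]
    {FB : ℝ → Submodule Λ B} {m : ℕ → (ℕ → B) → B}
    (hB : IsFilteredAInfty FB m) (z : B) :
    op2 m (op0 m) z + op1 m (op1 m z) + op2 m z (op0 m) = 0 := by
  have hq := hB.quad 1 (fun _ => z)
  rw [insSum] at hq
  simp only [Finset.sum_range_succ, Finset.sum_range_zero, zero_add] at hq
  norm_num at hq
  have e1 : ins2 m m 0 0 2 (fun _ => z) = op2 m (op0 m) z := by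
    rw [ins2, op2]
    apply hB.depends
    intro t ht
    interval_cases t
    · simp only [if_pos rfl, Nat.lt_irrefl, if_neg (by omega : ¬ (0:ℕ) < 0)]
      exact hB.depends 0 _ _ (fun t ht => absurd ht (Nat.not_lt_zero t))
    · norm_num
  have e2 : ins2 m m 0 1 1 (fun _ => z) = op1 m (op1 m z) := by
    rw [ins2, op1]
    apply hB.depends
    intro t ht
    interval_cases t
    simp [op1]
  have e3 : ins2 m m 1 0 2 (fun _ => z) = op2 m z (op0 m) := by
    rw [ins2, op2]
    apply hB.depends
    intro t ht
    interval_cases t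
    · norm_num
    · simp only [if_neg (by omega : ¬ (1:ℕ) < 1), if_pos rfl,
        if_neg (by omega : (1:ℕ) ≠ 0)]
      exact hB.depends 0 _ _ (fun t ht => absurd ht (Nat.not_lt_zero t))
  rw [e1, e2, e3] at hq
  exact hq

/-- In the setup of the curved homotopy transfer theorem — `B` a filtered A∞
algebra, `(A, d_A)` a `Λ`-module with a (not necessarily square-zero) differential, and
`Λ`-linear maps `α : A → B`, `β : B → A`, `h : B → B` satisfying the curved chain-map
relations, the curved homotopy relation, the side conditions `β∘h = 0`, `h∘α = 0`,
`β∘α = id`, and `val (h m⁰_B) > 0` — the maps `α` and `β` satisfy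
`β ∘ m¹_B ∘ m¹_B ∘ α = d_A ∘ d_A`. -/
theorem htt_almost_chain_map {Λ A B : Type} [CommRing Λ]
    [AddCommGroup A] [Module Λ A] [AddCommGroup B] [Module Λ B]
    (FB : ℝ → Submodule Λ B) (m : ℕ → (ℕ → B) → B)
    (hB : IsFilteredAInfty FB m)
    (dA : A →ₗ[Λ] A) (α : A →ₗ[Λ] B) (β : B →ₗ[Λ] A) (h : B →ₗ[Λ] B)
    (h1 : ∀ z : B, β (op1 m z) - dA (β z) =
      β (op2 m (h z) (op0 m) + op2 m (op0 m) (h z)))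
    (h2 : ∀ x : A, α (dA x) - op1 m (α x) =
      h (op2 m (α x) (op0 m) + op2 m (op0 m) (α x)))
    (h3 : ∀ z : B, h (op1 m z) + op1 m (h z) =
      z - α (β z) + h (op2 m (op0 m) (h z) + op2 m (h z) (op0 m)))
    (h4 : ∀ z : B, β (h z) = 0)
    (h5 : ∀ x : A, h (α x) = 0)
    (h6 : ∀ x : A, β (α x) = x)
    (h7 : PosVal FB (h (op0 m))) :
    ∀ x : A, β (op1 m (op1 m (α x))) = dA (dA x) := by
  intro x
  -- Step 1: `m¹ 0 = - h C0`, hence `β (m¹ 0) = 0`.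
  have e20 := h2 0
  rw [map_zero dA, map_zero α, zero_sub] at e20
  have hbm10 : β (op1 m 0) = 0 := by
    rw [neg_eq_iff_eq_neg.mp e20, map_neg, h4, neg_zero]
  -- Step 2: `β C0 = 0` where `C0 = m²(0,m⁰) + m²(m⁰,0)`.
  have e10 := h1 0
  rw [map_zero β, map_zero dA, map_zero h, hbm10, sub_self] at e10
  have hbC0 : β (op2 m 0 (op0 m)) + β (op2 m (op0 m) 0) = 0 := by
    rw [map_add] at e10
    exact e10.symm
  -- Step 3: `β (m¹ (m¹ 0)) = 0` from the arity-one A∞ relation.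
  have hq0 := congrArg β (quad_one hB 0)
  rw [map_add, map_add, map_zero] at hq0
  have hbmm0 : β (op1 m (op1 m 0)) = 0 := by
    have hsplit : β (op1 m (op1 m 0)) =
        (β (op2 m (op0 m) 0) + β (op1 m (op1 m 0)) + β (op2 m 0 (op0 m)))
          - (β (op2 m 0 (op0 m)) + β (op2 m (op0 m) 0)) := by abel
    rw [hsplit, hq0, hbC0, sub_zero]
  -- Step 4: `h (m¹ (α x)) = h (m¹ 0)`.
  have e3x := h3 (α x)
  rw [h5, h6, sub_self, zero_add] at e3x
  have e30 := h3 0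
  rw [map_zero h, map_zero β, map_zero α, sub_self, zero_add] at e30
  have hhm1 : h (op1 m (α x)) = h (op1 m 0) := by
    have hsplit : h (op1 m (α x)) =
        (h (op1 m (α x)) + op1 m 0) - (h (op1 m 0) + op1 m 0) + h (op1 m 0) := by abel
    rw [hsplit, e3x, e30, sub_self, zero_add]
  -- Step 5: `β (m¹ (α x)) = dA x`.
  have t5 := congrArg β (h2 x)
  rw [map_sub, h4, h6] at t5
  have hbm1 : β (op1 m (α x)) = dA x := (sub_eq_zero.mp t5).symm
  -- Step 6: the curvature correction term for `z = m¹ 0` vanishes.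
  have e1u := h1 (op1 m 0)
  rw [hbmm0, hbm10, map_zero dA, sub_self] at e1u
  -- Step 7: conclude via `h1` at `z = m¹ (α x)`.
  have e1f := h1 (op1 m (α x))
  rw [hbm1, hhm1, ← e1u] at e1f
  exact sub_eq_zero.mp e1f
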